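/- Let H ∈ (1/2,1). For all 0 < s < t the quantity φ(s,t) := (1/2)(t^{2H} − s^{2H} − (t−s)^{2H}) satisfies φ(s,t) > 0, and there is a constant C_H depending only on H such that φ(s,t) ≤ C_H min{ s t^{2H−1}, (t−s) t^{2H−1}, s^H (t−s)^H }. -/

import Mathlib

/-!
Write `α = 2H ∈ (1, 2)` and `u = t - s`, so that `2φ = (s + u)^α - s^α - u^α` is symmetric in
`s` and `u`. Positivity is strict superadditivity of `x ↦ x^α`. The tangent line of the convex
function `x ↦ x^α` at `t` gives `t^α - u^α ≤ α s t^(α-1)`, hence `φ ≤ H s t^(α-1)`, and by symmetry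
`φ ≤ H u t^(α-1)`. If `s ≤ u` then `t ≤ 2u`, so `φ ≤ 2 s u^(α-1) ≤ 2 s^H u^H`, the last step
because `(s/u)^(1-H) ≤ 1`; thus `C = 2` works.
-/

open Real Set

noncomputable section

/-- `φ(s,t) = (1/2)(t^{2H} − s^{2H} − (t−s)^{2H})`. -/
def phiFn (H s t : ℝ) : ℝ := (t ^ (2*H) - s ^ (2*H) - (t - s) ^ (2*H)) / 2

end

lemma rpow_add_rpow_lt_add_rpow {p a b : ℝ} (hp : 1 < p) (ha : 0 < a) (hb : 0 < b) :
    a ^ p + b ^ p < (a + b) ^ p := by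
  have hpow (x : ℝ) (hx : 0 < x) : x ^ p = x * x ^ (p - 1) := by
    rw [← rpow_one_add' hx.le (by linarith), add_sub_cancel]
  calc a ^ p + b ^ p = a * a ^ (p - 1) + b * b ^ (p - 1) := by rw [hpow a ha, hpow b hb]
    _ < a * (a + b) ^ (p - 1) + b * (a + b) ^ (p - 1) := by
        gcongr <;> linarith
    _ = (a + b) ^ p := by rw [hpow (a + b) (by positivity)]; ring

lemma rpow_sub_rpow_le_mul_rpow {p r t : ℝ} (hp : 1 ≤ p) (hr : 0 ≤ r) (hrt : r ≤ t) :
    t ^ p - r ^ p ≤ p * (t - r) * t ^ (p - 1) := by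
  rcases hrt.eq_or_lt with rfl | hrt
  · simp
  have hslope := (convexOn_rpow hp).slope_le_of_hasDerivAt (mem_Ici.2 hr)
    (mem_Ici.2 (hr.trans hrt.le)) hrt (hasDerivAt_rpow_const (Or.inl (hr.trans_lt hrt).ne'))
  rw [slope_def_field, div_le_iff₀ (sub_pos.2 hrt)] at hslope
  linarith

lemma mul_rpow_two_mul_sub_one_le {H u v : ℝ} (hH : H ≤ 1) (hu : 0 < u) (huv : u ≤ v) :
    u * v ^ (2 * H - 1) ≤ u ^ H * v ^ H := by
  have hv : 0 < v := hu.trans_le huv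
  calc u * v ^ (2 * H - 1) = u ^ H * v ^ H * (u ^ (1 - H) / v ^ (1 - H)) := by
        have hu' : u ^ H * u ^ (1 - H) = u := by rw [← rpow_add hu, add_sub_cancel, rpow_one]
        have hv' : v ^ (2 * H - 1) * v ^ (1 - H) = v ^ H := by rw [← rpow_add hv]; ring_nf
        rw [mul_div_assoc', eq_div_iff (by positivity)]
        linear_combination u * hv' - v ^ H * hu'
    _ ≤ u ^ H * v ^ H := by
        refine mul_le_of_le_one_right (by positivity) ?_
        exact (div_le_one (by positivity)).2 (rpow_le_rpow hu.le huv (by linarith))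

lemma phiFn_sub_left (H s t : ℝ) : phiFn H (t - s) t = phiFn H s t := by
  simp only [phiFn, sub_sub_cancel]
  ring

lemma phiFn_pos {H s t : ℝ} (hH : 1 / 2 < H) (hs : 0 < s) (hst : s < t) : 0 < phiFn H s t := by
  have := rpow_add_rpow_lt_add_rpow (p := 2 * H) (by linarith) hs (sub_pos.2 hst)
  rw [add_sub_cancel] at this
  unfold phiFn
  linarith

lemma phiFn_le_mul_rpow {H s t : ℝ} (hH : 1 / 2 ≤ H) (hs : 0 ≤ s) (hst : s ≤ t) :
    phiFn H s t ≤ H * (s * t ^ (2 * H - 1)) := by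
  have := rpow_sub_rpow_le_mul_rpow (p := 2 * H) (by linarith) (sub_nonneg.2 hst) (sub_le_self t hs)
  have : 0 ≤ s ^ (2 * H) := by positivity
  unfold phiFn
  linarith

lemma phiFn_le_two_mul_rpow_mul_rpow {H s t : ℝ} (hH : H ∈ Icc (1 / 2 : ℝ) 1) (hs : 0 < s)
    (hst : s < t) : phiFn H s t ≤ 2 * (s ^ H * (t - s) ^ H) := by
  wlog hle : s ≤ t - s generalizing s
  · have := this (sub_pos.2 hst) (sub_lt_self t hs) (by linarith)
    rwa [phiFn_sub_left, sub_sub_cancel, mul_comm (_ ^ H)] at this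
  obtain ⟨hH₁, hH₂⟩ := hH
  have ht : 0 < t := hs.trans hst
  have hts : 0 < t - s := sub_pos.2 hst
  have htwo : (2 : ℝ) ^ (2 * H - 1) ≤ 2 := by
    simpa using rpow_le_rpow_of_exponent_le (x := 2) one_le_two (show 2 * H - 1 ≤ 1 by linarith)
  calc phiFn H s t ≤ H * (s * t ^ (2 * H - 1)) := phiFn_le_mul_rpow hH₁ hs.le hst.le
    _ ≤ 1 * (s * (2 ^ (2 * H - 1) * (t - s) ^ (2 * H - 1))) := by
        rw [← mul_rpow zero_le_two hts.le]
        gcongr ?_ * (_ * ?_)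
        exact rpow_le_rpow ht.le (by linarith) (by linarith)
    _ ≤ 2 * (s * (t - s) ^ (2 * H - 1)) := by
        rw [one_mul, mul_left_comm]
        gcongr
    _ ≤ 2 * (s ^ H * (t - s) ^ H) :=
        mul_le_mul_of_nonneg_left (mul_rpow_two_mul_sub_one_le hH₂ hs hle) zero_le_two

/-- For `H ∈ (1/2,1)` and all `0 < s < t`, `φ(s,t) > 0`, and there is a
constant `C_H` with `φ(s,t) ≤ C_H min{s t^{2H−1}, (t−s) t^{2H−1}, s^H (t−s)^H}`. -/
theorem statement17 (H : ℝ) (hH : H ∈ Set.Ioo (1/2 : ℝ) 1) :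
    (∀ s t : ℝ, 0 < s → s < t → 0 < phiFn H s t) ∧
    ∃ C : ℝ, 0 < C ∧ ∀ s t : ℝ, 0 < s → s < t →
      phiFn H s t ≤ C * min (min (s * t ^ (2*H-1)) ((t-s) * t ^ (2*H-1)))
        (s ^ H * (t-s) ^ H) := by
  obtain ⟨hH₁, hH₂⟩ := hH
  refine ⟨fun s t hs hst ↦ phiFn_pos hH₁ hs hst, 2, two_pos, fun s t hs hst ↦ ?_⟩
  have ht : 0 < t := hs.trans hst
  have hts : 0 < t - s := sub_pos.2 hst
  have hH_le_two (x : ℝ) (hx : 0 ≤ x) : H * x ≤ 2 * x := by nlinarith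
  have hleft : phiFn H s t ≤ 2 * (s * t ^ (2 * H - 1)) :=
    (phiFn_le_mul_rpow hH₁.le hs.le hst.le).trans (hH_le_two _ (by positivity))
  have hright : phiFn H s t ≤ 2 * ((t - s) * t ^ (2 * H - 1)) := by
    rw [← phiFn_sub_left]
    exact (phiFn_le_mul_rpow hH₁.le hts.le (sub_le_self t hs.le)).trans
      (hH_le_two _ (by positivity))
  have hmixed := phiFn_le_two_mul_rpow_mul_rpow ⟨hH₁.le, hH₂.le⟩ hs hst
  rw [mul_min_of_nonneg _ _ zero_le_two, mul_min_of_nonneg _ _ zero_le_two]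
  exact le_min (le_min hleft hright) hmixed
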